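/- arXiv:1809.09954 — 4 statements merged into one kernel-verified Lean document; each statement's English description precedes it below -/
import Mathlib

section
/- The number of (k-1)-dimensional cells in the moduli space of m-colored one-loop graphs with s legs, for 3 ≤ k ≤ s, equals S(s,k) · (k-1)!/2 · m^k, where S(s,k) is the Stirling number of the second kind. -/
/-- Stirling numbers of the second kind. -/
def stirling : ℕ → ℕ → ℕ
  | 0, 0 => 1
  | 0, _ + 1 => 0
  | _ + 1, 0 => 0
  | n + 1, k + 1 => (k + 1) * stirling n (k + 1) + stirling n k

/-- A `(k-1)`-cell datum of the moduli space of `m`-colored one-loop graphs with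
`s` legs: a distribution of the `s` labeled legs onto the `k` cyclically
arranged vertices (a surjection `Fin s → ZMod k`), together with a coloring of
the `k` edges by `m` colors (edge `j` joins vertices `j` and `j+1`). -/
def CellDatum (s k m : ℕ) : Type :=
  {v : Fin s → ZMod k // Function.Surjective v} × (ZMod k → Fin m)

/-- Two cell data describe the same cell iff they differ by a rotation or a
reflection of the cycle: a rotation by `r` sends vertex `x` to `x + r` and edge
`j` to `j + r`; a reflection sends vertex `x` to `r - x` and edge `j` to
`r - j - 1`. -/
def CellRel (s k m : ℕ) : CellDatum s k m → CellDatum s k m → Prop :=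
  fun x y => ∃ r : ZMod k,
    ((∀ i, (y.1 : Fin s → ZMod k) i = (x.1 : Fin s → ZMod k) i + r) ∧
        (∀ j, y.2 j = x.2 (j - r))) ∨
    ((∀ i, (y.1 : Fin s → ZMod k) i = r - (x.1 : Fin s → ZMod k) i) ∧
        (∀ j, y.2 j = x.2 (r - j - 1)))

open Function

/-! ### Counting surjections -/

private lemma snoc_eq_iff {α : Type*} {n : ℕ} {p q : Fin n → α} {a b : α}
    (h : (Fin.snoc p a : Fin (n + 1) → α) = Fin.snoc q b) : p = q ∧ a = b := by
  constructor
  · funext i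
    have := congrFun h i.castSucc
    simpa using this
  · have := congrFun h (Fin.last n)
    simpa using this

/-- The classifying map for surjections out of `Fin (n+1)`. -/
private noncomputable def surAux (n k : ℕ) :
    ({g : Fin n → Fin (k + 1) // Surjective g} × Fin (k + 1)) ⊕
      ({h : Fin n → Fin k // Surjective h} × Fin (k + 1)) →
      {f : Fin (n + 1) → Fin (k + 1) // Surjective f}
  | .inl (g, a) => ⟨Fin.snoc g.1 a, by
      intro x
      obtain ⟨i, hi⟩ := g.2 x
      exact ⟨i.castSucc, by simp [hi]⟩⟩
  | .inr (h, a) => ⟨Fin.snoc (a.succAbove ∘ h.1) a, by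
      intro x
      rcases eq_or_ne x a with rfl | hx
      · exact ⟨Fin.last n, by simp⟩
      · obtain ⟨y, hy⟩ := Fin.exists_succAbove_eq hx
        obtain ⟨i, hi⟩ := h.2 y
        exact ⟨i.castSucc, by simp [hi, hy]⟩⟩

private lemma surAux_bijective (n k : ℕ) : Bijective (surAux n k) := by
  constructor
  · rintro (⟨g, a⟩ | ⟨h, a⟩) (⟨g', a'⟩ | ⟨h', a'⟩) hEq
    · obtain ⟨h1, h2⟩ := snoc_eq_iff (congrArg Subtype.val hEq)
      subst h2
      congr 1
      exact Prod.ext (Subtype.ext h1) rfl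
    · obtain ⟨h1, h2⟩ := snoc_eq_iff (congrArg Subtype.val hEq)
      exfalso
      obtain ⟨i, hi⟩ := (h1 ▸ g.2) a'
      exact Fin.succAbove_ne a' (h'.1 i) hi
    · obtain ⟨h1, h2⟩ := snoc_eq_iff (congrArg Subtype.val hEq)
      exfalso
      obtain ⟨i, hi⟩ := (h1 ▸ g'.2) a
      exact Fin.succAbove_ne a (h.1 i) hi
    · obtain ⟨h1, h2⟩ := snoc_eq_iff (congrArg Subtype.val hEq)
      subst h2
      have : h.1 = h'.1 := by
        funext i
        exact Fin.succAbove_right_injective (congrFun h1 i)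
      congr 1
      exact Prod.ext (Subtype.ext this) rfl
  · rintro ⟨f, hf⟩
    classical
    set g : Fin n → Fin (k + 1) := f ∘ Fin.castSucc with hg_def
    set a : Fin (k + 1) := f (Fin.last n) with ha_def
    have hsnoc : (Fin.snoc g a : Fin (n + 1) → Fin (k + 1)) = f := by
      funext i
      induction i using Fin.lastCases with
      | last => simp [ha_def]
      | cast i => simp [hg_def]
    by_cases hg : Surjective g
    · exact ⟨.inl (⟨g, hg⟩, a), Subtype.ext hsnoc⟩
    · -- g misses exactly a
      have hmiss : ∀ x : Fin (k + 1), x ≠ a → ∃ i, g i = x := by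
        intro x hx
        obtain ⟨j, hj⟩ := hf x
        rcases Fin.eq_castSucc_or_eq_last j with ⟨i, rfl⟩ | rfl
        · exact ⟨i, hj⟩
        · exact absurd (ha_def.trans hj) (Ne.symm hx)
      have hne : ∀ i, g i ≠ a := by
        intro i hi
        apply hg
        intro x
        rcases eq_or_ne x a with rfl | hx
        · exact ⟨i, hi⟩
        · exact hmiss x hx
      choose h hh using fun i => Fin.exists_succAbove_eq (hne i)
      have hsurj : Surjective h := by
        intro y
        obtain ⟨i, hi⟩ := hmiss (a.succAbove y) (Fin.succAbove_ne a y)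
        exact ⟨i, Fin.succAbove_right_injective (by rw [hh i, hi])⟩
      refine ⟨.inr (⟨h, hsurj⟩, a), Subtype.ext ?_⟩
      show (Fin.snoc (a.succAbove ∘ h) a : Fin (n + 1) → Fin (k + 1)) = f
      have hcomp : a.succAbove ∘ h = g := funext hh
      rw [hcomp, hsnoc]

private lemma card_sur (n : ℕ) : ∀ k : ℕ,
    Nat.card {f : Fin n → Fin k // Surjective f} = k.factorial * stirling n k := by
  induction n with
  | zero =>
    intro k
    cases k with
    | zero =>
      have h1 : Nat.factorial 0 * stirling 0 0 = 1 := rfl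
      rw [h1, Nat.card_eq_one_iff_unique]
      refine ⟨⟨fun a b => Subtype.ext (funext fun i => i.elim0)⟩,
        ⟨⟨fun i => i.elim0, fun x => x.elim0⟩⟩⟩
    | succ k =>
      have : IsEmpty {f : Fin 0 → Fin (k + 1) // Surjective f} := by
        constructor
        rintro ⟨f, hf⟩
        obtain ⟨i, -⟩ := hf 0
        exact i.elim0
      simp [Nat.card_of_isEmpty, stirling]
  | succ n ih =>
    intro k
    cases k with
    | zero =>
      have : IsEmpty {f : Fin (n + 1) → Fin 0 // Surjective f} := by
        constructor
        rintro ⟨f, -⟩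
        exact (f 0).elim0
      simp [Nat.card_of_isEmpty, stirling]
    | succ k =>
      have key := Nat.card_eq_of_bijective _ (surAux_bijective n k)
      rw [Nat.card_sum, Nat.card_prod, Nat.card_prod, Nat.card_eq_fintype_card (α := Fin (k+1)),
        Fintype.card_fin, ih (k + 1), ih k] at key
      rw [← key]
      show ((k+1).factorial * stirling n (k+1)) * (k+1) + (k.factorial * stirling n k) * (k+1)
          = (k+1).factorial * ((k + 1) * stirling n (k + 1) + stirling n k)
      rw [Nat.factorial_succ]
      ring

/-! ### The dihedral action -/

/-- The action of a rotation (`inl r`) or reflection (`inr r`) on a cell datum. -/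
def act (s k m : ℕ) (g : ZMod k ⊕ ZMod k) (x : CellDatum s k m) : CellDatum s k m :=
  match g with
  | .inl r =>
      (⟨fun i => x.1.1 i + r, fun a => by
          obtain ⟨i, hi⟩ := x.1.2 (a - r)
          exact ⟨i, by show x.1.1 i + r = a; rw [hi]; ring⟩⟩,
        fun j => x.2 (j - r))
  | .inr r =>
      (⟨fun i => r - x.1.1 i, fun a => by
          obtain ⟨i, hi⟩ := x.1.2 (r - a)
          exact ⟨i, by show r - x.1.1 i = a; rw [hi]; ring⟩⟩,
        fun j => x.2 (r - j - 1))

lemma cellRel_iff_act {s k m : ℕ} (x y : CellDatum s k m) :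
    CellRel s k m x y ↔ ∃ g, act s k m g x = y := by
  constructor
  · rintro ⟨r, ⟨h1, h2⟩ | ⟨h1, h2⟩⟩
    · exact ⟨.inl r, Prod.ext (Subtype.ext (funext fun i => (h1 i).symm))
        (funext fun j => (h2 j).symm)⟩
    · exact ⟨.inr r, Prod.ext (Subtype.ext (funext fun i => (h1 i).symm))
        (funext fun j => (h2 j).symm)⟩
  · rintro ⟨(r | r), rfl⟩
    · exact ⟨r, Or.inl ⟨fun i => rfl, fun j => rfl⟩⟩
    · exact ⟨r, Or.inr ⟨fun i => rfl, fun j => rfl⟩⟩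

lemma act_injective {s k m : ℕ} (hk : 3 ≤ k) (x : CellDatum s k m) :
    Injective (fun g => act s k m g x) := by
  haveI : NeZero k := ⟨by omega⟩
  have hv := x.1.2
  -- it is impossible that `a + a` is constant on `ZMod k`
  have hkey : ∀ c : ZMod k, ¬(∀ i, x.1.1 i + x.1.1 i = c) := by
    intro c hc
    have hall : ∀ a : ZMod k, a + a = c := by
      intro a
      obtain ⟨i, rfl⟩ := hv a
      exact hc i
    have h0 : c = 0 := by have := hall 0; simpa using this.symm
    have h1 : (2 : ZMod k) = 0 := by
      have := hall 1
      rw [h0] at this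
      rw [← this]; ring
    have : (k : ℕ) ∣ 2 := by
      have : ((2 : ℕ) : ZMod k) = 0 := by push_cast; exact h1
      exact (ZMod.natCast_eq_zero_iff 2 k).1 this
    have := Nat.le_of_dvd (by norm_num) this
    omega
  obtain ⟨i₀, -⟩ := hv 0
  rintro (r | r) (r' | r') h
  · have := congrFun (congrArg (fun z : CellDatum s k m => (z.1 : Fin s → ZMod k)) h) i₀
    simp only [act] at this
    exact congrArg Sum.inl (add_left_cancel this)
  · exfalso
    apply hkey (r' - r)
    intro i
    have := congrFun (congrArg (fun z : CellDatum s k m => (z.1 : Fin s → ZMod k)) h) i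
    simp only [act] at this
    linear_combination this
  · exfalso
    apply hkey (r - r')
    intro i
    have := congrFun (congrArg (fun z : CellDatum s k m => (z.1 : Fin s → ZMod k)) h) i
    simp only [act] at this
    linear_combination -this
  · have := congrFun (congrArg (fun z : CellDatum s k m => (z.1 : Fin s → ZMod k)) h) i₀
    simp only [act] at this
    have : r = r' := by linear_combination this
    exact congrArg Sum.inr this

lemma cellRel_equivalence {s k m : ℕ} : Equivalence (CellRel s k m) := by
  constructor
  · intro x
    exact ⟨0, Or.inl ⟨fun i => (add_zero _).symm, fun j => by rw [sub_zero]⟩⟩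
  · rintro x y ⟨r, ⟨h1, h2⟩ | ⟨h1, h2⟩⟩
    · refine ⟨-r, Or.inl ⟨fun i => by rw [h1 i]; ring, fun j => ?_⟩⟩
      rw [h2]
      exact congrArg x.2 (by ring)
    · refine ⟨r, Or.inr ⟨fun i => by rw [h1 i]; ring, fun j => ?_⟩⟩
      rw [h2]
      exact congrArg x.2 (by ring)
  · rintro x y z ⟨r, ⟨h1, h2⟩ | ⟨h1, h2⟩⟩ ⟨r', ⟨h1', h2'⟩ | ⟨h1', h2'⟩⟩
    · refine ⟨r + r', Or.inl ⟨fun i => by rw [h1' i, h1 i]; ring, fun j => ?_⟩⟩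
      rw [h2', h2]
      exact congrArg x.2 (by ring)
    · refine ⟨r' - r, Or.inr ⟨fun i => by rw [h1' i, h1 i]; ring, fun j => ?_⟩⟩
      rw [h2', h2]
      exact congrArg x.2 (by ring)
    · refine ⟨r + r', Or.inr ⟨fun i => by rw [h1' i, h1 i]; ring, fun j => ?_⟩⟩
      rw [h2', h2]
      exact congrArg x.2 (by ring)
    · refine ⟨r' - r, Or.inl ⟨fun i => by rw [h1' i, h1 i]; ring, fun j => ?_⟩⟩
      rw [h2', h2]
      exact congrArg x.2 (by ring)

/-- For `3 ≤ k ≤ s`, the number of `(k-1)`-dimensional cells of the moduli space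
of `m`-colored one-loop graphs with `s` legs equals `S(s,k)·(k-1)!/2·m^k`. -/
theorem card_cells (s k m : ℕ) (hk : 3 ≤ k) (hks : k ≤ s) :
    Nat.card (Quot (CellRel s k m)) =
      stirling s k * ((k - 1).factorial / 2) * m ^ k := by
  haveI : NeZero k := ⟨by omega⟩
  classical
  set R := CellRel s k m with hR
  have hequiv : Equivalence R := cellRel_equivalence
  have mk_eq : ∀ x y : CellDatum s k m, Quot.mk R x = Quot.mk R y ↔ R x y := by
    intro x y
    rw [Quot.eq]
    exact hequiv.eqvGen_iff
  -- the orbit map is a bijection from (orbits) × (group) to cell data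
  have Ψbij : Bijective (fun p : Quot R × (ZMod k ⊕ ZMod k) =>
      act s k m p.2 p.1.out) := by
    constructor
    · rintro ⟨c, g⟩ ⟨c', g'⟩ h
      simp only at h
      have r1 : R c.out (act s k m g c.out) := (cellRel_iff_act _ _).2 ⟨g, rfl⟩
      have r2 : R c'.out (act s k m g' c'.out) := (cellRel_iff_act _ _).2 ⟨g', rfl⟩
      have hcc : R c.out c'.out := hequiv.trans r1 (h ▸ hequiv.symm r2)
      have hc : c = c' := by
        rw [← Quot.out_eq c, ← Quot.out_eq c']
        exact (mk_eq _ _).2 hcc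
      subst hc
      have hg : g = g' := act_injective hk c.out h
      rw [hg]
    · intro x
      have hrel : R (Quot.mk R x).out x := (mk_eq _ _).1 (Quot.out_eq _)
      obtain ⟨g, hg⟩ := (cellRel_iff_act _ _).1 hrel
      exact ⟨(Quot.mk R x, g), hg⟩
  have hcard : Nat.card (Quot R) * (2 * k) = Nat.card (CellDatum s k m) := by
    have h := Nat.card_eq_of_bijective _ Ψbij
    rw [Nat.card_prod, Nat.card_sum, Nat.card_zmod] at h
    rw [← h]
    ring
  -- cardinality of the set of cell data
  have hCD : Nat.card (CellDatum s k m) = (k.factorial * stirling s k) * m ^ k := by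
    show Nat.card ({v : Fin s → ZMod k // Surjective v} × (ZMod k → Fin m)) = _
    rw [Nat.card_prod]
    congr 1
    · have e : ZMod k ≃ Fin k := Fintype.equivFinOfCardEq (ZMod.card k)
      have eq1 : {v : Fin s → ZMod k // Surjective v} ≃ {f : Fin s → Fin k // Surjective f} := by
        refine Equiv.subtypeEquiv (Equiv.arrowCongr (Equiv.refl (Fin s)) e) ?_
        intro v
        exact (Equiv.comp_surjective v e).symm
      rw [Nat.card_congr eq1, card_sur]
    · rw [Nat.card_fun, Nat.card_zmod, Nat.card_eq_fintype_card, Fintype.card_fin]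
  -- final arithmetic
  obtain ⟨t, ht⟩ : 2 ∣ (k - 1).factorial := Nat.dvd_factorial (by omega) (by omega)
  have htq : (k - 1).factorial / 2 = t := by omega
  have hfac : k.factorial = 2 * k * t := by
    have := Nat.mul_factorial_pred (n := k) (by omega)
    rw [ht] at this
    rw [← this]
    ring
  apply Nat.eq_of_mul_eq_mul_right (show 0 < 2 * k by omega)
  rw [hcard, hCD, hfac, htq]
  ring
end

section
/- For s ≥ 1 and k ≥ 1, the number of holocolored one-loop graphs with k internal edges and colors drawn injectively from a set of s colors equals s!/((s-k)!·(1+δ_{k,2})), i.e. binomial(s,k)·k! for k ≠ 2 and binomial(s,2) for k = 2. -/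
/-- Two holocolorings (injective assignments of colors from `Fin s` to the `k`
edges of a one-loop graph) are identified iff they differ by a graph
automorphism fixing the labeled vertices; such an automorphism can permute the
edges nontrivially only when `k = 2` (swapping the two parallel edges). -/
def HolocolorRel (s k : ℕ) : (Fin k ↪ Fin s) → (Fin k ↪ Fin s) → Prop :=
  fun f g => ∃ σ : Equiv.Perm (Fin k), (σ = 1 ∨ k = 2) ∧ g = σ.toEmbedding.trans f

/-- For `1 ≤ k ≤ s`, the number of holocolored one-loop graphs with `k` internal
edges and colors drawn injectively from a set of `s` colors equals
`s!/((s-k)!·(1+δ_{k,2}))`. -/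
theorem card_holocolorings (s k : ℕ) (hk : 1 ≤ k) (hks : k ≤ s) :
    Nat.card (Quot (HolocolorRel s k)) =
      s.factorial / ((s - k).factorial * (1 + if k = 2 then 1 else 0)) := by
  have hcard : Nat.card (Fin k ↪ Fin s) = s.factorial / (s - k).factorial := by
    rw [Nat.card_eq_fintype_card, Fintype.card_embedding_eq, Fintype.card_fin, Fintype.card_fin,
      Nat.descFactorial_eq_div hks]
  by_cases hk2 : k = 2
  · subst hk2
    have free : ∀ (f : Fin 2 ↪ Fin s) (σ τ : Equiv.Perm (Fin 2)),
        σ.toEmbedding.trans f = τ.toEmbedding.trans f → σ = τ := by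
      intro f σ τ h
      apply Equiv.ext
      intro x
      exact f.injective (by simpa using DFunLike.congr_fun h x)
    have hequiv : Equivalence (HolocolorRel s 2) := by
      constructor
      · intro f; exact ⟨1, Or.inr rfl, by ext x; simp⟩
      · rintro f g ⟨σ, -, rfl⟩
        exact ⟨σ⁻¹, Or.inr rfl, by ext x; simp⟩
      · rintro f g h ⟨σ, -, rfl⟩ ⟨τ, -, rfl⟩
        exact ⟨σ * τ, Or.inr rfl, by ext x; simp⟩
    have key : ∀ f g : Fin 2 ↪ Fin s,
        Quot.mk (HolocolorRel s 2) f = Quot.mk (HolocolorRel s 2) g →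
        HolocolorRel s 2 f g := by
      intro f g h
      exact hequiv.eqvGen_iff.mp (Quot.eq.mp h)
    set F : Quot (HolocolorRel s 2) × Equiv.Perm (Fin 2) → (Fin 2 ↪ Fin s) :=
      fun p => p.2.toEmbedding.trans p.1.out with hF
    have hmk : ∀ (f : Fin 2 ↪ Fin s) (σ : Equiv.Perm (Fin 2)),
        Quot.mk (HolocolorRel s 2) (σ.toEmbedding.trans f) = Quot.mk (HolocolorRel s 2) f :=
      fun f σ => (Quot.sound ⟨σ, Or.inr rfl, rfl⟩).symm
    have hbij : Function.Bijective F := by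
      constructor
      · rintro ⟨q, σ⟩ ⟨p, τ⟩ h
        simp only [hF] at h
        have hq : q = p := by
          calc q = Quot.mk _ q.out := (Quot.out_eq q).symm
            _ = Quot.mk _ (σ.toEmbedding.trans q.out) := (hmk _ _).symm
            _ = Quot.mk _ (τ.toEmbedding.trans p.out) := by rw [h]
            _ = Quot.mk _ p.out := hmk _ _
            _ = p := Quot.out_eq p
        subst hq
        exact Prod.ext rfl (free _ _ _ h)
      · intro g
        obtain ⟨σ, -, hg⟩ := key _ g (Quot.out_eq (Quot.mk _ g))
        exact ⟨⟨Quot.mk _ g, σ⟩, hg.symm⟩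
    have hc := Nat.card_congr (Equiv.ofBijective F hbij)
    rw [Nat.card_prod, hcard] at hc
    have h2 : Nat.card (Equiv.Perm (Fin 2)) = 2 := by
      rw [Nat.card_eq_fintype_card]
      simp [Fintype.card_perm]
    rw [h2] at hc
    rw [if_pos rfl, ← Nat.div_div_eq_div_mul, ← hc]
    omega
  · have hr : ∀ f g, HolocolorRel s k f g ↔ g = f := by
      intro f g
      constructor
      · rintro ⟨σ, h1 | h2, rfl⟩
        · subst h1; ext x; simp
        · exact absurd h2 hk2
      · rintro rfl
        exact ⟨1, Or.inl rfl, by ext x; simp⟩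
    have e : Quot (HolocolorRel s k) ≃ (Fin k ↪ Fin s) :=
      { toFun := Quot.lift id (fun a b h => ((hr a b).mp h).symm)
        invFun := Quot.mk _
        left_inv := fun q => by induction q using Quot.ind with | _ a => rfl
        right_inv := fun f => rfl }
    rw [Nat.card_congr e, hcard, if_neg hk2]
    norm_num
end

section
/- The number N_{k,s} of (k-1)-simplices in the moduli space of holocolored one-loop graphs with s legs is N_{k,s} = ((k-1)!/(2-δ_{k,1}))·binomial(s,k)·Σ_{j=0}^{k} (-1)^{k-j} binomial(k,j) j^s, for 1 ≤ k ≤ s. -/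
open Finset

/-- A `(k-1)`-simplex datum of the moduli space of holocolored one-loop graphs
with `s` legs: a distribution of the `s` labeled legs onto the `k` cyclically
arranged vertices (a surjection `Fin s → ZMod k`), together with an injective
coloring of the `k` edges by the `s` available colors (edge `j` joins vertices
`j` and `j+1`). -/
def SimplexDatum (s k : ℕ) : Type :=
  {v : Fin s → ZMod k // Function.Surjective v} ×
    {c : ZMod k → Fin s // Function.Injective c}

/-- Two simplex data describe the same simplex iff they differ by a rotation or
a reflection of the cycle: a rotation by `r` sends vertex `x` to `x + r` and
edge `j` to `j + r`; a reflection sends vertex `x` to `r - x` and edge `j` to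
`r - j - 1`. -/
def SimplexRel (s k : ℕ) : SimplexDatum s k → SimplexDatum s k → Prop :=
  fun x y => ∃ r : ZMod k,
    ((∀ i, (y.1 : Fin s → ZMod k) i = (x.1 : Fin s → ZMod k) i + r) ∧
        (∀ j, (y.2 : ZMod k → Fin s) j = (x.2 : ZMod k → Fin s) (j - r))) ∨
    ((∀ i, (y.1 : Fin s → ZMod k) i = r - (x.1 : Fin s → ZMod k) i) ∧
        (∀ j, (y.2 : ZMod k → Fin s) j = (x.2 : ZMod k → Fin s) (r - j - 1)))

/-!
The dihedral group of order `2k` acts on the set `X` of simplex data by rotating and reflecting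
the `k`-cycle, and `SimplexRel` is its orbit relation. A group element fixing a datum fixes every
vertex (the legs reach all of them) and every edge (the coloring is injective), which for `k ≠ 1`
forces it to be the identity. Hence for `k ≥ 2` the action is free and there are `|X| / 2k`
simplices, while for `k = 1` it is trivial and there are `|X|`. Finally
`|X| = s!/(s-k)! · #{surjections Fin s → ZMod k}`, and inclusion–exclusion over the set of
missed vertices counts the surjections.
-/

open Function MulAction

open Fintype in
theorem natCard_surjective_eq_sum (α β : Type*) [Fintype α] [Fintype β] :
    (Nat.card {f : α → β // Surjective f} : ℤ) =
      ∑ j ∈ range (card β + 1),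
        (-1 : ℤ) ^ (card β - j) * (card β).choose j * (j : ℤ) ^ card α := by
  classical
  let missing (b : β) : Finset (α → β) := piFinset fun _ => {b}ᶜ
  have h_surj :
      univ.inf (fun b => (missing b)ᶜ) = univ.filter fun f : α → β => Surjective f := by
    ext f
    simp only [missing, mem_inf, mem_univ, mem_compl, mem_piFinset, mem_singleton, not_forall,
      Decidable.not_not, forall_const, mem_filter, true_and]
    rfl
  have h_missing (t : Finset β) : #(t.inf missing) = (card β - #t) ^ card α := by
    have : t.inf missing = piFinset fun _ => tᶜ := by
      ext f
      simp only [missing, mem_inf, mem_piFinset, mem_compl, mem_singleton]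
      exact ⟨fun h a ha => h _ ha a rfl, fun h i hi a hfa => h a (hfa ▸ hi)⟩
    rw [this, card_piFinset, prod_const, card_compl, card_univ]
  rw [Nat.card_eq_fintype_card, Fintype.card_subtype, ← h_surj,
    inclusion_exclusion_card_inf_compl]
  simp_rw [h_missing, Nat.cast_pow]
  rw [sum_powerset_apply_card (fun m => (-1 : ℤ) ^ m * ((card β - m : ℕ) : ℤ) ^ card α),
    card_univ, ← sum_range_reflect]
  refine Finset.sum_congr rfl fun j hj => ?_
  have hj : j ≤ card β := Nat.lt_succ_iff.mp (mem_range.mp hj)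
  rw [add_tsub_cancel_right, Nat.choose_symm hj, Nat.sub_sub_self hj, nsmul_eq_mul]
  ring

namespace DihedralGroup

variable {n : ℕ}

/-- With Mathlib's convention `r i * sr j = sr (j - i)`, the rotation `r i` has to act as
`x ↦ x - i` for this to be a homomorphism. -/
def vertexPerm : DihedralGroup n →* Equiv.Perm (ZMod n) where
  toFun
    | r i => Equiv.subRight i
    | sr i => Equiv.subLeft i
  map_one' := Equiv.ext sub_zero
  map_mul' := by
    rintro (i | i) (j | j) <;> ext x <;>
      simp only [r_mul_r, r_mul_sr, sr_mul_r, sr_mul_sr, Equiv.Perm.mul_apply,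
        Equiv.subRight_apply, Equiv.subLeft_apply] <;> ring

/-- The action induced by `vertexPerm` on the edges of the `n`-cycle, edge `j` joining the
vertices `j` and `j + 1`. -/
def edgePerm : DihedralGroup n →* Equiv.Perm (ZMod n) where
  toFun
    | r i => Equiv.subRight i
    | sr i => Equiv.subLeft (i - 1)
  map_one' := Equiv.ext sub_zero
  map_mul' := by
    rintro (i | i) (j | j) <;> ext x <;>
      simp only [r_mul_r, r_mul_sr, sr_mul_r, sr_mul_sr, Equiv.Perm.mul_apply,
        Equiv.subRight_apply, Equiv.subLeft_apply] <;> ring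

@[simp] theorem vertexPerm_r (i x : ZMod n) : vertexPerm (r i) x = x - i := rfl

@[simp] theorem vertexPerm_sr (i x : ZMod n) : vertexPerm (sr i) x = i - x := rfl

@[simp] theorem edgePerm_r (i x : ZMod n) : edgePerm (r i) x = x - i := rfl

@[simp] theorem edgePerm_sr (i x : ZMod n) : edgePerm (sr i) x = i - 1 - x := rfl

theorem eq_one_of_vertexPerm_eq_one_of_edgePerm_eq_one (hn : n ≠ 1) {g : DihedralGroup n}
    (hv : vertexPerm g = 1) (he : edgePerm g = 1) : g = 1 := by
  have hv0 := DFunLike.congr_fun hv 0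
  have he0 := DFunLike.congr_fun he 0
  rcases g with i | i <;>
    simp only [vertexPerm_r, vertexPerm_sr, edgePerm_r, edgePerm_sr, zero_sub, sub_zero,
      neg_eq_zero, Equiv.Perm.one_apply] at hv0 he0
  · rw [hv0, one_def]
  · rw [hv0, zero_sub, neg_eq_zero, ZMod.one_eq_zero_iff] at he0
    exact absurd he0 hn

end DihedralGroup

namespace MulAction

variable {G X : Type*} [Group G] [MulAction G X]

theorem natCard_eq_natCard_orbitRel_quotient_mul_natCard
    (h : ∀ (g : G) (x : X), g • x = x → g = 1) :
    Nat.card X = Nat.card (orbitRel.Quotient G X) * Nat.card G :=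
  (Nat.card_congr (selfEquivOrbitsQuotientProd fun x =>
    (Subgroup.eq_bot_iff_forall _).2 fun g hg => h g x hg)).trans (Nat.card_prod _ _)

theorem natCard_orbitRel_quotient_of_forall_smul_eq (h : ∀ (g : G) (x : X), g • x = x) :
    Nat.card (orbitRel.Quotient G X) = Nat.card X := by
  refine (Nat.card_congr (Equiv.ofBijective (Quotient.mk _) ⟨?_, Quotient.mk_surjective⟩)).symm
  intro x y hxy
  obtain ⟨g, rfl⟩ := mem_orbit_iff.mp (orbitRel_apply.mp (Quotient.exact hxy))
  exact h g y

end MulAction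

namespace SimplexDatum

open DihedralGroup

variable {s k : ℕ}

theorem ext {x y : SimplexDatum s k} (h₁ : (x.1 : Fin s → ZMod k) = y.1)
    (h₂ : (x.2 : ZMod k → Fin s) = y.2) : x = y :=
  Prod.ext (Subtype.ext h₁) (Subtype.ext h₂)

instance : SMul (DihedralGroup k) (SimplexDatum s k) where
  smul g x :=
    (⟨vertexPerm g ∘ x.1, (vertexPerm g).surjective.comp x.1.2⟩,
      ⟨x.2 ∘ edgePerm g⁻¹, x.2.2.comp (edgePerm g⁻¹).injective⟩)

theorem coe_smul_fst (g : DihedralGroup k) (x : SimplexDatum s k) :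
    ((g • x).1 : Fin s → ZMod k) = vertexPerm g ∘ x.1 := rfl

theorem coe_smul_snd (g : DihedralGroup k) (x : SimplexDatum s k) :
    ((g • x).2 : ZMod k → Fin s) = x.2 ∘ edgePerm g⁻¹ := rfl

instance : MulAction (DihedralGroup k) (SimplexDatum s k) where
  one_smul x :=
    ext (by rw [coe_smul_fst, map_one]; rfl) (by rw [coe_smul_snd, inv_one, map_one]; rfl)
  mul_smul g h x :=
    ext (by rw [coe_smul_fst, coe_smul_fst, coe_smul_fst, map_mul]; rfl)
      (by rw [coe_smul_snd, coe_smul_snd, coe_smul_snd, mul_inv_rev, map_mul]; rfl)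

theorem smul_eq_self_iff {g : DihedralGroup k} {x : SimplexDatum s k} :
    g • x = x ↔ vertexPerm g = 1 ∧ edgePerm g = 1 := by
  refine ⟨fun h => ⟨?_, ?_⟩, fun ⟨hv, he⟩ => ext ?_ ?_⟩
  · ext y
    obtain ⟨a, rfl⟩ := x.1.2 y
    exact congrFun (congrArg (fun x : SimplexDatum s k => (x.1 : Fin s → ZMod k)) h) a
  · ext j
    have := congrFun (congrArg (fun x : SimplexDatum s k => (x.2 : ZMod k → Fin s)) h)
      (edgePerm g j)
    rw [coe_smul_snd, comp_apply, ← Equiv.Perm.mul_apply, ← map_mul, inv_mul_cancel,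
      map_one, Equiv.Perm.one_apply] at this
    exact (x.2.2 this).symm
  · rw [coe_smul_fst, hv]; rfl
  · rw [coe_smul_snd, map_inv, he, inv_one]; rfl

theorem simplexRel_iff_mem_orbit {x y : SimplexDatum s k} :
    SimplexRel s k x y ↔ y ∈ orbit (DihedralGroup k) x := by
  rw [mem_orbit_iff]
  constructor
  · rintro ⟨ρ, ⟨hv, he⟩ | ⟨hv, he⟩⟩
    · refine ⟨r (-ρ), ext (funext fun a => ?_) (funext fun j => ?_)⟩
      · simp [coe_smul_fst, hv]
      · simp [coe_smul_snd, he, sub_eq_add_neg]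
    · refine ⟨sr ρ, ext (funext fun a => ?_) (funext fun j => ?_)⟩
      · simp [coe_smul_fst, hv]
      · simp only [coe_smul_snd, inv_sr, comp_apply, edgePerm_sr, he]
        rw [sub_right_comm]
  · rintro ⟨i | i, rfl⟩
    · refine ⟨-i, Or.inl ⟨fun a => ?_, fun j => ?_⟩⟩
      · simp [coe_smul_fst, sub_eq_add_neg]
      · simp [coe_smul_snd]
    · refine ⟨i, Or.inr ⟨fun a => ?_, fun j => ?_⟩⟩
      · simp [coe_smul_fst]
      · simp only [coe_smul_snd, inv_sr, comp_apply, edgePerm_sr]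
        rw [sub_right_comm]

theorem natCard_eq_descFactorial_mul [NeZero k] :
    Nat.card (SimplexDatum s k) =
      s.descFactorial k * Nat.card {v : Fin s → ZMod k // Surjective v} := by
  rw [SimplexDatum, Nat.card_prod, Nat.card_congr (Equiv.subtypeInjectiveEquivEmbedding _ _),
    Nat.card_eq_fintype_card (α := ZMod k ↪ Fin s), Fintype.card_embedding_eq, ZMod.card,
    Fintype.card_fin, mul_comm]

theorem natCard_eq_natCard_quot_mul :
    Nat.card (SimplexDatum s k) =
      Nat.card (Quot (SimplexRel s k)) * if k = 1 then 1 else 2 * k := by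
  have e : Quot (SimplexRel s k) ≃ orbitRel.Quotient (DihedralGroup k) (SimplexDatum s k) :=
    Quot.congrRight fun _ _ =>
      simplexRel_iff_mem_orbit.trans (mem_orbit_symm.trans orbitRel_apply.symm)
  rw [Nat.card_congr e]
  split_ifs with hk
  · subst hk
    rw [natCard_orbitRel_quotient_of_forall_smul_eq, mul_one]
    exact fun g x => smul_eq_self_iff.2 ⟨Subsingleton.elim _ _, Subsingleton.elim _ _⟩
  · rw [← DihedralGroup.nat_card]
    refine natCard_eq_natCard_orbitRel_quotient_mul_natCard fun g x h => ?_
    obtain ⟨hv, he⟩ := smul_eq_self_iff.1 h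
    exact eq_one_of_vertexPerm_eq_one_of_edgePerm_eq_one hk hv he

end SimplexDatum

open SimplexDatum in
theorem card_simplices_general (s k : ℕ) (hk : 1 ≤ k) :
    (Nat.card (Quot (SimplexRel s k)) : ℚ) =
      ((k - 1).factorial : ℚ) / (2 - if k = 1 then 1 else 0) * (s.choose k) *
        ∑ j ∈ range (k + 1), (-1 : ℚ) ^ (k - j) * (k.choose j) * (j : ℚ) ^ s := by
  have : NeZero k := ⟨by omega⟩
  have h_surj : (Nat.card {v : Fin s → ZMod k // Surjective v} : ℚ) =
      ∑ j ∈ range (k + 1), (-1 : ℚ) ^ (k - j) * (k.choose j) * (j : ℚ) ^ s := by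
    have h := natCard_surjective_eq_sum (Fin s) (ZMod k)
    rw [ZMod.card, Fintype.card_fin] at h
    exact_mod_cast h
  have h_count := natCard_eq_natCard_quot_mul (s := s) (k := k)
  rw [natCard_eq_descFactorial_mul, Nat.descFactorial_eq_factorial_mul_choose,
    ← Nat.mul_factorial_pred (by omega : k ≠ 0)] at h_count
  rw [← h_surj]
  rcases eq_or_ne k 1 with rfl | hk1
  · norm_num at h_count ⊢
    exact_mod_cast h_count.symm
  · rw [if_neg hk1] at h_count ⊢
    qify at h_count
    apply mul_right_cancel₀ (show (2 * k : ℚ) ≠ 0 by positivity)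
    rw [← h_count]
    ring

/-- For `1 ≤ k ≤ s`, the number `N_{k,s}` of `(k-1)`-simplices in the moduli
space of holocolored one-loop graphs with `s` legs is
`N_{k,s} = ((k-1)!/(2-δ_{k,1}))·C(s,k)·∑_{j=0}^k (-1)^(k-j) C(k,j) j^s`. -/
theorem card_simplices (s k : ℕ) (hk : 1 ≤ k) (hks : k ≤ s) :
    (Nat.card (Quot (SimplexRel s k)) : ℚ) =
      ((k - 1).factorial : ℚ) / (2 - if k = 1 then 1 else 0) * (s.choose k) *
        ∑ j ∈ range (k + 1), (-1 : ℚ) ^ (k - j) * (k.choose j) * (j : ℚ) ^ s :=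
  card_simplices_general s k hk
end

section
/- The first homology group of the moduli space X_2^m of m-colored one-loop graphs with 2 legs is free abelian of rank (m-1)(m-2)/2, and satisfies the recursion H_1(X_2^m) ≅ H_1(X_2^{m-1}) ⊕ Z^{m-2} for m ≥ 2. -/
/-- Vertices of the 1-dimensional CW-complex `X_2^m` (the moduli space of
`m`-colored one-loop graphs with 2 legs): `m` roses `r_i`, `m` monochromatic
banana graphs `b_i`, and for each unordered pair `i < j` of colors the midpoint
of the arc `β_{ij}` (the banana with edges colored `i` and `j` of equal length). -/
def VertX2 (m : ℕ) : Type :=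
  Fin m ⊕ Fin m ⊕ {p : Fin m × Fin m // p.1 < p.2}

/-- Edges of `X_2^m`: the arcs `β_i` joining `b_i` to `r_i`, and for each pair
`i < j` the two 1-cubes of the arc `β_{ij}`, joining `r_i` (resp. `r_j`) to the
midpoint. -/
def EdgeX2 (m : ℕ) : Type :=
  Fin m ⊕ ({p : Fin m × Fin m // p.1 < p.2} × Bool)


instance (m : ℕ) : DecidableEq (VertX2 m) :=
  inferInstanceAs (DecidableEq (Fin m ⊕ Fin m ⊕ {p : Fin m × Fin m // p.1 < p.2}))

instance (m : ℕ) : Fintype (VertX2 m) :=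
  inferInstanceAs (Fintype (Fin m ⊕ Fin m ⊕ {p : Fin m × Fin m // p.1 < p.2}))

instance (m : ℕ) : DecidableEq (EdgeX2 m) :=
  inferInstanceAs (DecidableEq (Fin m ⊕ ({p : Fin m × Fin m // p.1 < p.2} × Bool)))

instance (m : ℕ) : Fintype (EdgeX2 m) :=
  inferInstanceAs (Fintype (Fin m ⊕ ({p : Fin m × Fin m // p.1 < p.2} × Bool)))

/-- The two endpoints of each edge of `X_2^m`. -/
def endsX2 (m : ℕ) : EdgeX2 m → VertX2 m × VertX2 m
  | Sum.inl i => (Sum.inr (Sum.inl i), Sum.inl i)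
  | Sum.inr (p, b) => (Sum.inl (if b then p.1.1 else p.1.2), Sum.inr (Sum.inr p))

/-- The simplicial boundary matrix of the 1-complex `X_2^m`. -/
def boundaryX2 (m : ℕ) : Matrix (VertX2 m) (EdgeX2 m) ℤ :=
  Matrix.of fun v e =>
    (if v = (endsX2 m e).2 then 1 else 0) - (if v = (endsX2 m e).1 then 1 else 0)

/-- The first homology of `X_2^m` (kernel of the boundary map of the
1-complex). -/
def H1X2 (m : ℕ) : Submodule ℤ (EdgeX2 m → ℤ) :=
  LinearMap.ker (boundaryX2 m).mulVecLin

/-!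
A 1-cycle on `X_2^m` vanishes on each arc `β_i`, since the banana `b_i` is a leaf, and takes
opposite values on the two halves of each arc `β_{ij}`. So `H_1(X_2^m)` is the cycle space of
the complete graph `K_m`. A cycle on `K_{n+1}` is freely determined by its values on the edges
of `K_n`: conservation at a vertex `j + 1` fixes the value on the edge `0 → j + 1`, and
conservation at `0` then holds automatically because the divergences of any chain sum to zero.
Hence `H_1(X_2^m) ≅ ℤ^(m-1 choose 2)`, and the recursion comes from splitting the edges of
`K_{n+1}` into those of `K_n` and the `n` edges at `0`.
-/

open scoped Matrix

section CompleteGraph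

abbrev CompleteEdge (n : ℕ) : Type := {p : Fin n × Fin n // p.1 < p.2}

def completeIncidence (n : ℕ) : Matrix (Fin n) (CompleteEdge n) ℤ :=
  Matrix.of fun v p => (if v = p.1.2 then 1 else 0) - (if v = p.1.1 then 1 else 0)

def completeCycles (n : ℕ) : Submodule ℤ (CompleteEdge n → ℤ) :=
  LinearMap.ker (completeIncidence n).mulVecLin

lemma mem_completeCycles {n : ℕ} {y : CompleteEdge n → ℤ} :
    y ∈ completeCycles n ↔ completeIncidence n *ᵥ y = 0 := Iff.rfl

lemma sum_completeIncidence_mulVec (n : ℕ) (y : CompleteEdge n → ℤ) :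
    ∑ v, (completeIncidence n *ᵥ y) v = 0 := by
  simp only [Matrix.mulVec, dotProduct, completeIncidence, Matrix.of_apply]
  rw [Finset.sum_comm]
  simp [sub_mul, Finset.sum_sub_distrib]

def succCompleteEdgeEquiv (n : ℕ) : CompleteEdge n ⊕ Fin n ≃ CompleteEdge (n + 1) where
  toFun
    | Sum.inl p => ⟨(p.1.1.succ, p.1.2.succ), Fin.succ_lt_succ_iff.2 p.2⟩
    | Sum.inr j => ⟨(0, j.succ), Fin.succ_pos j⟩
  invFun q :=
    if h : q.1.1 = 0 then Sum.inr (q.1.2.pred (ne_of_gt (h ▸ q.2)))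
    else Sum.inl ⟨(q.1.1.pred h, q.1.2.pred (ne_of_gt ((Fin.pos_iff_ne_zero.2 h).trans q.2))),
      by simpa [Fin.pred_lt_pred_iff] using q.2⟩
  left_inv := by
    rintro (p | j) <;> simp [Fin.succ_ne_zero]
  right_inv := by
    rintro ⟨⟨a, b⟩, h⟩
    by_cases ha : a = 0
    · subst ha; simp
    · simp [ha]

lemma card_completeEdge (n : ℕ) : Fintype.card (CompleteEdge n) = n.choose 2 := by
  induction n with
  | zero => simp
  | succ n ih =>
    rw [← Fintype.card_congr (succCompleteEdgeEquiv n), Fintype.card_sum, ih, Fintype.card_fin,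
      Nat.choose_succ_succ', Nat.choose_one_right, add_comm]

variable {n : ℕ}

lemma completeIncidence_mulVec_succ (y : CompleteEdge (n + 1) → ℤ) (j : Fin n) :
    (completeIncidence (n + 1) *ᵥ y) j.succ =
      (completeIncidence n *ᵥ (y ∘ succCompleteEdgeEquiv n ∘ Sum.inl)) j
        + y (succCompleteEdgeEquiv n (Sum.inr j)) := by
  simp only [Matrix.mulVec, dotProduct]
  rw [← (succCompleteEdgeEquiv n).sum_comp, Fintype.sum_sum_type]
  simp [completeIncidence, succCompleteEdgeEquiv, Fin.succ_ne_zero]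

lemma completeIncidence_mulVec_zero (y : CompleteEdge (n + 1) → ℤ) :
    (completeIncidence (n + 1) *ᵥ y) 0 = -∑ j, y (succCompleteEdgeEquiv n (Sum.inr j)) := by
  simp only [Matrix.mulVec, dotProduct]
  rw [← (succCompleteEdgeEquiv n).sum_comp, Fintype.sum_sum_type]
  simp [completeIncidence, succCompleteEdgeEquiv, (Fin.succ_ne_zero _).symm]

/-- `K_{n+1}` is the cone over `K_n` with apex `0`; the value on the edge `0 → j + 1` balances
the flow at `j + 1`. -/
def coneExtend (n : ℕ) (z : CompleteEdge n → ℤ) : CompleteEdge (n + 1) → ℤ :=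
  Sum.elim z (-(completeIncidence n *ᵥ z)) ∘ (succCompleteEdgeEquiv n).symm

lemma coneExtend_mem_completeCycles (z : CompleteEdge n → ℤ) :
    coneExtend n z ∈ completeCycles (n + 1) := by
  rw [mem_completeCycles]
  ext v
  cases v using Fin.cases with
  | zero =>
    simp [completeIncidence_mulVec_zero, coneExtend, sum_completeIncidence_mulVec]
  | succ j =>
    simp [completeIncidence_mulVec_succ, coneExtend, Function.comp_def]

lemma coneExtend_of_mem {y : CompleteEdge (n + 1) → ℤ} (hy : y ∈ completeCycles (n + 1)) :
    coneExtend n (y ∘ succCompleteEdgeEquiv n ∘ Sum.inl) = y := by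
  funext q
  obtain ⟨e, rfl⟩ := (succCompleteEdgeEquiv n).surjective q
  rcases e with p | j
  · simp [coneExtend]
  · have h := congrFun (mem_completeCycles.1 hy) j.succ
    rw [completeIncidence_mulVec_succ, Pi.zero_apply] at h
    simp only [coneExtend, Function.comp_apply, Equiv.symm_apply_apply, Sum.elim_inr,
      Pi.neg_apply]
    linarith

def completeCyclesSuccEquiv (n : ℕ) : completeCycles (n + 1) ≃ₗ[ℤ] (CompleteEdge n → ℤ) where
  toFun y := y.1 ∘ succCompleteEdgeEquiv n ∘ Sum.inl
  invFun z := ⟨coneExtend n z, coneExtend_mem_completeCycles z⟩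
  map_add' _ _ := rfl
  map_smul' _ _ := rfl
  left_inv y := Subtype.ext (coneExtend_of_mem y.2)
  right_inv z := by funext p; simp [coneExtend]

end CompleteGraph

section X2

variable {m : ℕ}

lemma sum_edgeX2 (f : EdgeX2 m → ℤ) :
    ∑ e, f e = ∑ i, f (Sum.inl i) + ∑ q, (f (Sum.inr (q, true)) + f (Sum.inr (q, false))) :=
  (Fintype.sum_sum_type (α₁ := Fin m) (α₂ := CompleteEdge m × Bool) f).trans <| by
    rw [Fintype.sum_prod_type]
    simp only [Fintype.sum_bool]

/-- Stated on the underlying sum types, so that `simp` can match constructor terms, which the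
semireducible synonyms `VertX2` and `EdgeX2` would block. -/
lemma boundaryX2_apply (v : Fin m ⊕ Fin m ⊕ CompleteEdge m)
    (e : Fin m ⊕ (CompleteEdge m × Bool)) :
    boundaryX2 m v e =
      @ite _ (v = (endsX2 m e).2) (instDecidableEqVertX2 m _ _) 1 0
        - @ite _ (v = (endsX2 m e).1) (instDecidableEqVertX2 m _ _) 1 0 := rfl

lemma boundaryX2_mulVec_banana (x : EdgeX2 m → ℤ) (i : Fin m) :
    (boundaryX2 m *ᵥ x) (Sum.inr (Sum.inl i)) = -x (Sum.inl i) := by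
  simp [Matrix.mulVec, dotProduct, sum_edgeX2, boundaryX2_apply, endsX2, VertX2]

lemma boundaryX2_mulVec_midpoint (x : EdgeX2 m → ℤ) (q : CompleteEdge m) :
    (boundaryX2 m *ᵥ x) (Sum.inr (Sum.inr q)) = x (Sum.inr (q, true)) + x (Sum.inr (q, false)) := by
  simp [Matrix.mulVec, dotProduct, sum_edgeX2, boundaryX2_apply, endsX2, VertX2,
    Finset.sum_add_distrib]

/-- The edge `i → j` of `K_m` becomes the arc `β_{ij}`, run from `r_i` to `r_j` through its
midpoint. -/
def liftX2 (m : ℕ) (y : CompleteEdge m → ℤ) : EdgeX2 m → ℤ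
  | Sum.inl _ => 0
  | Sum.inr (q, true) => y q
  | Sum.inr (q, false) => -y q

lemma boundaryX2_mulVec_liftX2 (y : CompleteEdge m → ℤ) :
    boundaryX2 m *ᵥ liftX2 m y = Sum.elim (completeIncidence m *ᵥ y) 0 := by
  funext v
  rcases v with j | i | q
  · simp [Matrix.mulVec, dotProduct, sum_edgeX2, boundaryX2_apply, endsX2, VertX2, liftX2,
      completeIncidence, sub_mul, neg_add_eq_sub]
  · simp [boundaryX2_mulVec_banana, liftX2]
  · simp [boundaryX2_mulVec_midpoint, liftX2]

lemma liftX2_mem_H1X2_iff {y : CompleteEdge m → ℤ} :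
    liftX2 m y ∈ H1X2 m ↔ y ∈ completeCycles m := by
  simp only [H1X2, completeCycles, LinearMap.mem_ker, Matrix.mulVecLin_apply,
    boundaryX2_mulVec_liftX2]
  exact ⟨fun h => funext fun j => congrFun h (Sum.inl j),
    fun h => by rw [h]; exact Sum.elim_zero_zero⟩

lemma liftX2_eq_of_mem {x : EdgeX2 m → ℤ} (hx : x ∈ H1X2 m) :
    liftX2 m (fun q => x (Sum.inr (q, true))) = x := by
  have hbdry : boundaryX2 m *ᵥ x = 0 := hx
  funext e
  rcases e with i | ⟨q, _ | _⟩
  · have h : (boundaryX2 m *ᵥ x) (Sum.inr (Sum.inl i)) = 0 := congrFun hbdry _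
    rw [boundaryX2_mulVec_banana] at h
    simp only [liftX2]
    linarith
  · have h : (boundaryX2 m *ᵥ x) (Sum.inr (Sum.inr q)) = 0 := congrFun hbdry _
    rw [boundaryX2_mulVec_midpoint] at h
    simp only [liftX2]
    linarith
  · rfl

def h1X2EquivCompleteCycles (m : ℕ) : H1X2 m ≃ₗ[ℤ] completeCycles m where
  toFun x := ⟨fun q => x.1 (Sum.inr (q, true)), by
    rw [← liftX2_mem_H1X2_iff, liftX2_eq_of_mem x.2]; exact x.2⟩
  invFun y := ⟨liftX2 m y, liftX2_mem_H1X2_iff.2 y.2⟩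
  map_add' _ _ := rfl
  map_smul' _ _ := rfl
  left_inv x := Subtype.ext (liftX2_eq_of_mem x.2)
  right_inv _ := rfl

end X2

noncomputable def h1X2Equiv : (m : ℕ) → H1X2 m ≃ₗ[ℤ] (CompleteEdge (m - 1) → ℤ)
  | 0 =>
    haveI : IsEmpty (EdgeX2 0) := inferInstanceAs (IsEmpty (Fin 0 ⊕ _))
    LinearEquiv.ofSubsingleton _ (CompleteEdge 0 → ℤ)
  | n + 1 => (h1X2EquivCompleteCycles (n + 1)).trans (completeCyclesSuccEquiv n)

/-- `H_1(X_2^m)` is free abelian of rank `(m-1)(m-2)/2`, and for `m ≥ 2` it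
satisfies the recursion `H_1(X_2^m) ≅ H_1(X_2^{m-1}) ⊕ ℤ^{m-2}`. -/
theorem first_homology_X2 (m : ℕ) :
    Module.Free ℤ (H1X2 m) ∧
    Module.finrank ℤ (H1X2 m) = (m - 1) * (m - 2) / 2 ∧
    (2 ≤ m → Nonempty ((H1X2 m) ≃ₗ[ℤ] (H1X2 (m - 1)) × (Fin (m - 2) → ℤ))) := by
  refine ⟨Module.Free.of_equiv (h1X2Equiv m).symm, ?_, fun hm => ?_⟩
  · rw [(h1X2Equiv m).finrank_eq, Module.finrank_fintype_fun_eq_card, card_completeEdge,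
      Nat.choose_two_right, Nat.sub_sub]
  · obtain ⟨n, rfl⟩ : ∃ n, m = n + 2 := ⟨m - 2, by omega⟩
    exact ⟨(h1X2Equiv (n + 2)).trans <|
      (LinearEquiv.funCongrLeft ℤ ℤ (succCompleteEdgeEquiv n)).trans <|
      (LinearEquiv.sumArrowLequivProdArrow _ _ ℤ ℤ).trans <|
      (h1X2Equiv (n + 1)).symm.prodCongr (LinearEquiv.refl ℤ _)⟩
end
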